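/- arXiv:2202.03598 — 2 statements merged into one kernel-verified Lean document; each statement's English description precedes it below -/
import Mathlib

section
/- Let Ω be a convex domain (open bounded convex set) in ℝⁿ, let x ∈ Ω, and let 0 < r < R. Then vol(B(x,r) ∩ Ω) / vol(B(x,R) ∩ Ω) ≥ (r/R)ⁿ, where vol denotes Lebesgue measure and B(x,s) is the closed ball of radius s centered at x. -/
open MeasureTheory Metric Set AffineMap Module

/-! A homothety of ratio `t = r / R` centred at `x` maps `B(x, R) ∩ Ω` into `B(x, r) ∩ Ω`, by
convexity of `Ω`, and multiplies Haar measure by `t ^ n`. -/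

theorem IsOpen.measure_closedBall_inter_ne_zero {X : Type*} [PseudoMetricSpace X]
    [MeasurableSpace X] (μ : Measure X) [μ.IsOpenPosMeasure] {s : Set X} (hs : IsOpen s)
    {x : X} (hx : x ∈ s) {r : ℝ} (hr : 0 < r) : μ (closedBall x r ∩ s) ≠ 0 :=
  fun h ↦ (isOpen_ball.inter hs).measure_ne_zero μ ⟨x, mem_ball_self hr, hx⟩ <|
    measure_mono_null (inter_subset_inter_left s ball_subset_closedBall) h

section Homothety

variable {E : Type*} [NormedAddCommGroup E] [NormedSpace ℝ E]

theorem Convex.image_homothety_subset {s : Set E} (hs : Convex ℝ s) {x : E} (hx : x ∈ s)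
    {t : ℝ} (ht : t ∈ Icc (0 : ℝ) 1) : homothety x t '' s ⊆ s := by
  rintro _ ⟨y, hy, rfl⟩
  rw [homothety_eq_lineMap]
  exact hs.lineMap_mem hx hy ht

theorem image_homothety_closedBall_subset (x : E) {t : ℝ} (ht : 0 ≤ t) (R : ℝ) :
    homothety x t '' closedBall x R ⊆ closedBall x (t * R) := by
  rintro _ ⟨y, hy, rfl⟩
  rw [mem_closedBall, dist_homothety_center, Real.norm_of_nonneg ht, dist_comm]
  exact mul_le_mul_of_nonneg_left (mem_closedBall.1 hy) ht

variable [MeasurableSpace E] [BorelSpace E] [FiniteDimensional ℝ E]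
  (μ : Measure E) [μ.IsAddHaarMeasure]

theorem Convex.ofReal_pow_mul_addHaar_closedBall_inter_le {s : Set E} (hs : Convex ℝ s)
    {x : E} (hx : x ∈ s) {r R : ℝ} (hr : 0 ≤ r) (hrR : r ≤ R) :
    ENNReal.ofReal ((r / R) ^ finrank ℝ E) * μ (closedBall x R ∩ s) ≤
      μ (closedBall x r ∩ s) := by
  set t := r / R
  have hR : 0 ≤ R := hr.trans hrR
  have ht : t ∈ Icc (0 : ℝ) 1 := ⟨div_nonneg hr hR, div_le_one_of_le₀ hrR hR⟩
  have htR : t * R = r := div_mul_cancel_of_imp fun hR0 ↦ le_antisymm (hR0 ▸ hrR) hr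
  calc ENNReal.ofReal (t ^ finrank ℝ E) * μ (closedBall x R ∩ s)
      = μ (homothety x t '' (closedBall x R ∩ s)) := by
        rw [Measure.addHaar_image_homothety, abs_of_nonneg (pow_nonneg ht.1 _)]
    _ ≤ μ (closedBall x r ∩ s) := by
        refine measure_mono ((image_inter_subset _ _ _).trans (inter_subset_inter ?_ ?_))
        · exact htR ▸ image_homothety_closedBall_subset x ht.1 R
        · exact hs.image_homothety_subset hx ht

end Homothety

theorem convex_volume_ratio_ge_general (n : ℕ) (Ω : Set (EuclideanSpace ℝ (Fin n)))
    (hΩo : IsOpen Ω) (hΩc : Convex ℝ Ω)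
    (x : EuclideanSpace ℝ (Fin n)) (hx : x ∈ Ω) (r R : ℝ) (hr : 0 < r) (hrR : r < R) :
    ENNReal.ofReal ((r / R) ^ n) ≤
      volume (closedBall x r ∩ Ω) / volume (closedBall x R ∩ Ω) := by
  have hnum : volume (closedBall x r ∩ Ω) ≠ 0 :=
    hΩo.measure_closedBall_inter_ne_zero volume hx hr
  have hden : volume (closedBall x R ∩ Ω) ≠ ⊤ :=
    measure_ne_top_of_subset inter_subset_left measure_closedBall_lt_top.ne
  rw [ENNReal.le_div_iff_mul_le (Or.inr hnum) (Or.inl hden)]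
  simpa only [finrank_euclideanSpace_fin] using
    hΩc.ofReal_pow_mul_addHaar_closedBall_inter_le volume hx hr.le hrR.le

/-- Bishop–Gromov type inequality for convex domains in ℝⁿ:
the volume ratio of concentric ball intersections is at least `(r/R)^n`. -/
theorem convex_volume_ratio_ge (n : ℕ) (Ω : Set (EuclideanSpace ℝ (Fin n)))
    (hΩo : IsOpen Ω) (hΩc : Convex ℝ Ω) (hΩb : Bornology.IsBounded Ω)
    (x : EuclideanSpace ℝ (Fin n)) (hx : x ∈ Ω) (r R : ℝ) (hr : 0 < r) (hrR : r < R) :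
    ENNReal.ofReal ((r / R) ^ n) ≤
      volume (closedBall x r ∩ Ω) / volume (closedBall x R ∩ Ω) :=
  convex_volume_ratio_ge_general n Ω hΩo hΩc x hx r R hr hrR
end

section
/- Let A and B be nonempty measurable subsets of ℝⁿ and t ∈ [0,1]. Then vol((1-t)·A + t·B)^(1/n) ≥ (1-t)·vol(A)^(1/n) + t·vol(B)^(1/n), where (1-t)A + tB = {(1-t)x + ty : x ∈ A, y ∈ B} (assume the Minkowski combination is measurable, or use outer measure). -/
/-!
The Prékopa–Leindler inequality: if `f x ^ (1 - t) * g y ^ t ≤ h ((1 - t) • x + t • y)` for all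
`x, y`, then `(∫ f) ^ (1 - t) * (∫ g) ^ t ≤ ∫ h`. On the line, after rescaling `f` to have the
same supremum as `g`, the superlevel sets `{f > s}` and `{g > s}` are empty or nonempty together,
and the one-dimensional inequality `|A| + |B| ≤ |A + B|` (translate compact pieces of `A` and `B`
so that they meet in a single point of `A + B`) integrates, by the layer-cake formula, to the
weighted arithmetic-mean form, hence to the geometric one. Fubini carries the inequality to
products, hence to `ℝⁿ`. For indicator functions it reads
`|A| ^ (1 - t) * |B| ^ t ≤ |(1 - t) • A + t • B|`, and rescaling `A` and `B` to sets of equal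
volume turns this into `|A| ^ (1/n) + |B| ^ (1/n) ≤ |A + B| ^ (1/n)`.
-/

open MeasureTheory Set Pointwise

open scoped ENNReal

theorem ENNReal.geom_mean_le_arith_mean2_weighted {t : ℝ} (ht0 : 0 < t) (ht1 : t < 1)
    (a b : ℝ≥0∞) : a ^ (1 - t) * b ^ t ≤ ENNReal.ofReal (1 - t) * a + ENNReal.ofReal t * b := by
  have h1t : 0 < 1 - t := sub_pos.2 ht1
  have key := ENNReal.young_inequality (a ^ (1 - t)) (b ^ t)
    (Real.holderConjugate_one_div h1t ht0 (sub_add_cancel 1 t))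
  rwa [← ENNReal.rpow_mul, ← ENNReal.rpow_mul, mul_one_div_cancel h1t.ne',
    mul_one_div_cancel ht0.ne', ENNReal.rpow_one, ENNReal.rpow_one, one_div, one_div,
    ENNReal.ofReal_inv_of_pos h1t, ENNReal.ofReal_inv_of_pos ht0, div_eq_mul_inv, div_eq_mul_inv,
    inv_inv, inv_inv, mul_comm a, mul_comm b] at key

theorem ENNReal.iSup_rpow {ι : Sort*} (f : ι → ℝ≥0∞) {p : ℝ} (hp : 0 < p) :
    (⨆ i, f i) ^ p = ⨆ i, f i ^ p :=
  Monotone.map_iSup_of_continuousAt ENNReal.continuous_rpow_const.continuousAt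
    (ENNReal.monotone_rpow_of_nonneg hp.le) (ENNReal.zero_rpow_of_pos hp)

section Lintegral

variable {α : Type*} [MeasurableSpace α] (μ : Measure α) {f : α → ℝ≥0∞}

theorem volume_Ioi_inter_setOf_ofReal_lt (a : ℝ≥0∞) :
    volume (Ioi 0 ∩ {s : ℝ | ENNReal.ofReal s < a}) = a := by
  rcases eq_or_ne a ∞ with rfl | ha
  · simp
  have : Ioi 0 ∩ {s : ℝ | ENNReal.ofReal s < a} = Ioo 0 a.toReal := by
    ext s
    simp only [mem_inter_iff, mem_Ioi, mem_ofPred_eq, mem_Ioo, and_congr_right_iff]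
    exact fun hs => ENNReal.ofReal_lt_iff_lt_toReal hs.le ha
  rw [this, Real.volume_Ioo, sub_zero, ENNReal.ofReal_toReal ha]

theorem lintegral_eq_lintegral_meas_ofReal_lt [SFinite μ] (hf : Measurable f) :
    ∫⁻ x, f x ∂μ = ∫⁻ s in Ioi 0, μ {x | ENNReal.ofReal s < f x} := by
  set E := {p : α × ℝ | ENNReal.ofReal p.2 < f p.1}
  have hE : MeasurableSet E := measurableSet_lt (by fun_prop) (hf.comp measurable_fst)
  calc ∫⁻ x, f x ∂μ = ∫⁻ x, volume.restrict (Ioi 0) (Prod.mk x ⁻¹' E) ∂μ := by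
        congr with x
        rw [Measure.restrict_apply' measurableSet_Ioi, inter_comm]
        exact (volume_Ioi_inter_setOf_ofReal_lt (f x)).symm
    _ = μ.prod (volume.restrict (Ioi 0)) E := (Measure.prod_apply hE).symm
    _ = ∫⁻ s in Ioi 0, μ {x | ENNReal.ofReal s < f x} := Measure.prod_apply_symm hE

theorem lintegral_eq_iSup_lintegral_min_natCast (hf : Measurable f) :
    ∫⁻ x, f x ∂μ = ⨆ M : ℕ, ∫⁻ x, min (f x) M ∂μ := by
  rw [← lintegral_iSup (fun M => hf.min measurable_const)
    fun M N hMN x => min_le_min_left _ (Nat.cast_le.2 hMN)]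
  congr with x
  rw [← inf_iSup_eq, ENNReal.iSup_natCast, inf_top_eq]

end Lintegral

section Translation

variable {G : Type*} [AddCommGroup G] [MeasurableSpace G] {μ : Measure G} [μ.IsAddLeftInvariant]
  {s t : Set G}

theorem measure_le_measure_add_left (hs : s.Nonempty) : μ t ≤ μ (s + t) := by
  obtain ⟨a, ha⟩ := hs
  calc μ t = μ (a +ᵥ t) := (measure_vadd μ a t).symm
    _ ≤ μ (s + t) := measure_mono (vadd_set_subset_add ha)

theorem measure_le_measure_add_right (ht : t.Nonempty) : μ s ≤ μ (s + t) :=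
  add_comm t s ▸ measure_le_measure_add_left ht

end Translation

section OneDimensionalBrunnMinkowski

variable {μ : Measure ℝ}

theorem measure_add_measure_le_measure_add_of_isCompact [μ.IsAddLeftInvariant]
    [NullSingletonClass μ] {K L : Set ℝ} (hK : IsCompact K) (hL : IsCompact L)
    (hK₀ : K.Nonempty) (hL₀ : L.Nonempty) : μ K + μ L ≤ μ (K + L) := by
  set a := sSup K
  set b := sInf L
  have hleft : b +ᵥ K ⊆ Iic (a + b) := by
    rintro _ ⟨k, hk, rfl⟩
    simpa [add_comm b] using le_csSup hK.bddAbove hk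
  have hright : a +ᵥ L ⊆ Ici (a + b) := by
    rintro _ ⟨l, hl, rfl⟩
    simpa using csInf_le hL.bddBelow hl
  have hunion : (b +ᵥ K) ∪ (a +ᵥ L) ⊆ K + L := union_subset
    (add_comm L K ▸ vadd_set_subset_add (hL.sInf_mem hL₀)) (vadd_set_subset_add (hK.sSup_mem hK₀))
  have hinter : (b +ᵥ K) ∩ (a +ᵥ L) ⊆ {a + b} := by
    simpa only [Iic_inter_Ici, Icc_self] using inter_subset_inter hleft hright
  calc μ K + μ L = μ (b +ᵥ K) + μ (a +ᵥ L) := by rw [measure_vadd, measure_vadd]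
    _ = μ ((b +ᵥ K) ∪ (a +ᵥ L)) + μ ((b +ᵥ K) ∩ (a +ᵥ L)) :=
      (measure_union_add_inter _ (hL.measurableSet.const_vadd a)).symm
    _ ≤ μ (K + L) + μ {a + b} := add_le_add (measure_mono hunion) (measure_mono hinter)
    _ = μ (K + L) := by rw [measure_singleton, add_zero]

variable [μ.IsAddHaarMeasure]

theorem measure_add_measure_le_measure_add {A B : Set ℝ} (hA : A.Nonempty) (hB : B.Nonempty)
    (hAm : MeasurableSet A) (hBm : MeasurableSet B) : μ A + μ B ≤ μ (A + B) := by
  rw [hAm.measure_eq_iSup_isCompact, hBm.measure_eq_iSup_isCompact]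
  simp only [iSup_and']
  refine ENNReal.biSup_add_biSup_le' ⟨∅, empty_subset _, isCompact_empty⟩
    ⟨∅, empty_subset _, isCompact_empty⟩ fun K ⟨hKA, hK⟩ L ⟨hLB, hL⟩ => ?_
  rcases K.eq_empty_or_nonempty with rfl | hK₀
  · simpa using (measure_mono hLB).trans (measure_le_measure_add_left hA)
  rcases L.eq_empty_or_nonempty with rfl | hL₀
  · simpa using (measure_mono hKA).trans (measure_le_measure_add_right hB)
  exact (measure_add_measure_le_measure_add_of_isCompact hK hL hK₀ hL₀).trans
    (measure_mono (add_subset_add hKA hLB))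

theorem ofReal_mul_add_ofReal_mul_le_measure_smul_add_smul {t : ℝ} (ht0 : 0 ≤ t) (ht1 : t ≤ 1)
    {A B : Set ℝ} (hA : A.Nonempty) (hB : B.Nonempty) (hAm : MeasurableSet A)
    (hBm : MeasurableSet B) :
    ENNReal.ofReal (1 - t) * μ A + ENNReal.ofReal t * μ B ≤ μ ((1 - t) • A + t • B) := by
  have := measure_add_measure_le_measure_add (μ := μ) hA.smul_set hB.smul_set
    (hAm.const_smul₀ (1 - t)) (hBm.const_smul₀ t)
  rwa [Measure.addHaar_smul_of_nonneg _ (sub_nonneg.2 ht1), Measure.addHaar_smul_of_nonneg _ ht0,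
    Module.finrank_self, pow_one, pow_one] at this

end OneDimensionalBrunnMinkowski

def SatisfiesPrekopaLeindler {E : Type*} [AddCommMonoid E] [Module ℝ E] [MeasurableSpace E]
    (μ : Measure E) : Prop :=
  ∀ ⦃t : ℝ⦄, 0 < t → t < 1 → ∀ ⦃f g h : E → ℝ≥0∞⦄, Measurable f → Measurable g →
    Measurable h → (∀ x y, f x ^ (1 - t) * g y ^ t ≤ h ((1 - t) • x + t • y)) →
    (∫⁻ x, f x ∂μ) ^ (1 - t) * (∫⁻ y, g y ∂μ) ^ t ≤ ∫⁻ z, h z ∂μ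

theorem smul_setOf_lt_add_smul_setOf_lt_subset {E : Type*} [AddCommMonoid E] [Module ℝ E]
    {t : ℝ} (ht0 : 0 < t) (ht1 : t < 1) {f g h : E → ℝ≥0∞}
    (hfgh : ∀ x y, f x ^ (1 - t) * g y ^ t ≤ h ((1 - t) • x + t • y)) (c : ℝ≥0∞) :
    (1 - t) • {x | c < f x} + t • {y | c < g y} ⊆ {z | c < h z} := by
  rintro _ ⟨_, ⟨x, hx, rfl⟩, _, ⟨y, hy, rfl⟩, rfl⟩
  calc c = c ^ (1 - t) * c ^ t := by
        rw [← ENNReal.rpow_add_of_nonneg _ _ (sub_nonneg.2 ht1.le) ht0.le, sub_add_cancel,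
          ENNReal.rpow_one]
    _ < f x ^ (1 - t) * g y ^ t :=
      ENNReal.mul_lt_mul (ENNReal.rpow_lt_rpow hx (sub_pos.2 ht1)) (ENNReal.rpow_lt_rpow hy ht0)
    _ ≤ h ((1 - t) • x + t • y) := hfgh x y

section OneDimensionalPrekopaLeindler

variable {μ : Measure ℝ} [μ.IsAddHaarMeasure] {t : ℝ} {f g h : ℝ → ℝ≥0∞}

theorem arith_mean_lintegral_le_of_iSup_eq (ht0 : 0 < t) (ht1 : t < 1) (hf : Measurable f)
    (hg : Measurable g) (hh : Measurable h) (hsup : ⨆ x, f x = ⨆ y, g y)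
    (hfgh : ∀ x y, f x ^ (1 - t) * g y ^ t ≤ h ((1 - t) • x + t • y)) :
    ENNReal.ofReal (1 - t) * ∫⁻ x, f x ∂μ + ENNReal.ofReal t * ∫⁻ y, g y ∂μ ≤ ∫⁻ z, h z ∂μ := by
  have hlevel : ∀ s : ℝ, ENNReal.ofReal (1 - t) * μ {x | ENNReal.ofReal s < f x} +
      ENNReal.ofReal t * μ {y | ENNReal.ofReal s < g y} ≤ μ {z | ENNReal.ofReal s < h z} := by
    intro s
    by_cases hs : ENNReal.ofReal s < ⨆ x, f x
    · have hF : {x | ENNReal.ofReal s < f x}.Nonempty := lt_iSup_iff.1 hs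
      have hG : {y | ENNReal.ofReal s < g y}.Nonempty := lt_iSup_iff.1 (hs.trans_eq hsup)
      exact (ofReal_mul_add_ofReal_mul_le_measure_smul_add_smul ht0.le ht1.le hF hG
        (measurableSet_lt measurable_const hf) (measurableSet_lt measurable_const hg)).trans
        (measure_mono (smul_setOf_lt_add_smul_setOf_lt_subset ht0 ht1 hfgh _))
    · have hF : {x | ENNReal.ofReal s < f x} = ∅ :=
        not_nonempty_iff_eq_empty.1 fun hF => hs (lt_iSup_iff.2 hF)
      have hG : {y | ENNReal.ofReal s < g y} = ∅ :=
        not_nonempty_iff_eq_empty.1 fun hG => hs (hsup ▸ lt_iSup_iff.2 hG)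
      simp [hF, hG]
  rw [lintegral_eq_lintegral_meas_ofReal_lt μ hf, lintegral_eq_lintegral_meas_ofReal_lt μ hg,
    lintegral_eq_lintegral_meas_ofReal_lt μ hh, ← lintegral_const_mul' _ _ ENNReal.ofReal_ne_top,
    ← lintegral_const_mul' _ _ ENNReal.ofReal_ne_top]
  exact (le_lintegral_add _ _).trans (lintegral_mono hlevel)

theorem geom_mean_lintegral_le_of_iSup_ne_top (ht0 : 0 < t) (ht1 : t < 1) (hf : Measurable f)
    (hg : Measurable g) (hh : Measurable h) (hfsup : ⨆ x, f x ≠ ∞) (hgsup : ⨆ y, g y ≠ ∞)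
    (hfgh : ∀ x y, f x ^ (1 - t) * g y ^ t ≤ h ((1 - t) • x + t • y)) :
    (∫⁻ x, f x ∂μ) ^ (1 - t) * (∫⁻ y, g y ∂μ) ^ t ≤ ∫⁻ z, h z ∂μ := by
  have h1t : 0 < 1 - t := sub_pos.2 ht1
  rcases eq_or_ne (⨆ x, f x) 0 with hf0 | hf0
  · simp [ENNReal.iSup_eq_zero.1 hf0, ENNReal.zero_rpow_of_pos h1t]
  rcases eq_or_ne (⨆ y, g y) 0 with hg0 | hg0
  · simp [ENNReal.iSup_eq_zero.1 hg0, ENNReal.zero_rpow_of_pos ht0]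
  set c := (⨆ y, g y) / ⨆ x, f x
  have hc0 : c ≠ 0 := ENNReal.div_ne_zero.2 ⟨hg0, hfsup⟩
  have hctop : c ≠ ∞ := ENNReal.div_ne_top hgsup hf0
  have hsup : ⨆ x, c * f x = ⨆ y, g y := by
    rw [← ENNReal.mul_iSup, ENNReal.div_mul_cancel hf0 hfsup]
  have hcond : ∀ x y, (c * f x) ^ (1 - t) * g y ^ t ≤ c ^ (1 - t) * h ((1 - t) • x + t • y) := by
    intro x y
    rw [ENNReal.mul_rpow_of_nonneg _ _ h1t.le, mul_assoc]
    exact mul_le_mul_right (hfgh x y) _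
  have key := (ENNReal.geom_mean_le_arith_mean2_weighted ht0 ht1 _ _).trans
    (arith_mean_lintegral_le_of_iSup_eq (μ := μ) ht0 ht1 (hf.const_mul c) hg (hh.const_mul _)
      hsup hcond)
  rw [lintegral_const_mul' _ _ hctop, lintegral_const_mul' _ _ (by finiteness),
    ENNReal.mul_rpow_of_nonneg _ _ h1t.le, mul_assoc] at key
  exact (ENNReal.mul_le_mul_iff_right (by positivity) (by finiteness)).1 key

theorem satisfiesPrekopaLeindler_addHaar_real : SatisfiesPrekopaLeindler μ := by
  intro t ht0 ht1 f g h hf hg hh hfgh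
  have htrunc : ∀ M N : ℕ,
      (∫⁻ x, min (f x) M ∂μ) ^ (1 - t) * (∫⁻ y, min (g y) N ∂μ) ^ t ≤ ∫⁻ z, h z ∂μ :=
    fun M N => geom_mean_lintegral_le_of_iSup_ne_top ht0 ht1
      (hf.min measurable_const) (hg.min measurable_const) hh
      (ne_top_of_le_ne_top (ENNReal.natCast_ne_top M) (iSup_le fun _ => min_le_right _ _))
      (ne_top_of_le_ne_top (ENNReal.natCast_ne_top N) (iSup_le fun _ => min_le_right _ _))
      fun x y => (mul_le_mul' (ENNReal.rpow_le_rpow (min_le_left _ _) (sub_pos.2 ht1).le)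
        (ENNReal.rpow_le_rpow (min_le_left _ _) ht0.le)).trans (hfgh x y)
  rw [lintegral_eq_iSup_lintegral_min_natCast μ hf, lintegral_eq_iSup_lintegral_min_natCast μ hg,
    ENNReal.iSup_rpow _ (sub_pos.2 ht1), ENNReal.iSup_rpow _ ht0, ENNReal.iSup_mul]
  exact iSup_le fun M => by rw [ENNReal.mul_iSup]; exact iSup_le (htrunc M)

end OneDimensionalPrekopaLeindler

namespace SatisfiesPrekopaLeindler

variable {E F : Type*} [AddCommGroup E] [Module ℝ E] [MeasurableSpace E]
  [AddCommGroup F] [Module ℝ F] [MeasurableSpace F]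

theorem dirac (a : E) : SatisfiesPrekopaLeindler (Measure.dirac a) := by
  intro t ht0 ht1 f g h hf hg hh hfgh
  rw [lintegral_dirac' a hf, lintegral_dirac' a hg, lintegral_dirac' a hh]
  simpa [Convex.combo_self (sub_add_cancel 1 t)] using hfgh a a

theorem map {μ : Measure E} {ν : Measure F} (hμ : SatisfiesPrekopaLeindler μ) (e : E →ₗ[ℝ] F)
    (he : MeasurePreserving e μ ν) : SatisfiesPrekopaLeindler ν := by
  intro t ht0 ht1 f g h hf hg hh hfgh
  rw [← he.lintegral_comp hf, ← he.lintegral_comp hg, ← he.lintegral_comp hh]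
  exact hμ ht0 ht1 (hf.comp he.measurable) (hg.comp he.measurable) (hh.comp he.measurable)
    fun x y => by simpa using hfgh (e x) (e y)

theorem prod {μ : Measure E} {ν : Measure F} [SFinite ν] (hμ : SatisfiesPrekopaLeindler μ)
    (hν : SatisfiesPrekopaLeindler ν) : SatisfiesPrekopaLeindler (μ.prod ν) := by
  intro t ht0 ht1 f g h hf hg hh hfgh
  rw [lintegral_prod f hf.aemeasurable, lintegral_prod g hg.aemeasurable,
    lintegral_prod h hh.aemeasurable]
  exact hμ ht0 ht1 hf.lintegral_prod_right' hg.lintegral_prod_right' hh.lintegral_prod_right'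
    fun x₁ x₂ => hν ht0 ht1 (hf.comp measurable_prodMk_left) (hg.comp measurable_prodMk_left)
      (hh.comp measurable_prodMk_left) fun y₁ y₂ => hfgh (x₁, y₁) (x₂, y₂)

theorem measure_rpow_mul_measure_rpow_le {μ : Measure E} (hμ : SatisfiesPrekopaLeindler μ)
    {t : ℝ} (ht0 : 0 < t) (ht1 : t < 1) {A B : Set E} (hA : MeasurableSet A)
    (hB : MeasurableSet B) (hAB : MeasurableSet ((1 - t) • A + t • B)) :
    μ A ^ (1 - t) * μ B ^ t ≤ μ ((1 - t) • A + t • B) := by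
  have hcond : ∀ x y, A.indicator 1 x ^ (1 - t) * B.indicator 1 y ^ t ≤
      ((1 - t) • A + t • B).indicator (1 : E → ℝ≥0∞) ((1 - t) • x + t • y) := by
    intro x y
    by_cases hx : x ∈ A
    · by_cases hy : y ∈ B
      · simp [hx, hy, add_mem_add (smul_mem_smul_set hx) (smul_mem_smul_set hy)]
      · simp [hy, ENNReal.zero_rpow_of_pos ht0]
    · simp [hx, ENNReal.zero_rpow_of_pos (sub_pos.2 ht1)]
  simpa [lintegral_indicator_one, hA, hB, hAB] using
    hμ ht0 ht1 (measurable_one.indicator hA) (measurable_one.indicator hB)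
      (measurable_one.indicator hAB) hcond

end SatisfiesPrekopaLeindler

theorem satisfiesPrekopaLeindler_volume_pi :
    ∀ n : ℕ, SatisfiesPrekopaLeindler (volume : Measure (Fin n → ℝ))
  | 0 => Measure.volume_pi_eq_dirac (0 : Fin 0 → ℝ) ▸ .dirac 0
  | n + 1 => by
    have hcons : ⇑(MeasurableEquiv.piFinSuccAbove (fun _ : Fin (n + 1) => ℝ) 0).symm =
        Fin.consLinearEquiv ℝ fun _ : Fin (n + 1) => ℝ := by
      ext p : 1
      simp
      rfl
    exact (satisfiesPrekopaLeindler_addHaar_real.prod (satisfiesPrekopaLeindler_volume_pi n)).map _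
      (hcons ▸ (volume_preserving_piFinSuccAbove (fun _ : Fin (n + 1) => ℝ) 0).symm)

theorem satisfiesPrekopaLeindler_volume_euclideanSpace (n : ℕ) :
    SatisfiesPrekopaLeindler (volume : Measure (EuclideanSpace ℝ (Fin n))) :=
  (satisfiesPrekopaLeindler_volume_pi n).map (WithLp.linearEquiv 2 ℝ (Fin n → ℝ)).symm.toLinearMap
    (PiLp.volume_preserving_toLp _)

theorem Measure.addHaar_smul_rpow_one_div {E : Type*} [NormedAddCommGroup E]
    [NormedSpace ℝ E] [MeasurableSpace E] [BorelSpace E] [FiniteDimensional ℝ E] (μ : Measure E)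
    [μ.IsAddHaarMeasure] {n : ℕ} (hE : Module.finrank ℝ E = n) (hn : 0 < n) {r : ℝ} (hr : 0 ≤ r)
    (s : Set E) : μ (r • s) ^ (1 / n : ℝ) = ENNReal.ofReal r * μ s ^ (1 / n : ℝ) := by
  rw [Measure.addHaar_smul_of_nonneg μ hr, hE, ENNReal.mul_rpow_of_nonneg _ _ (by positivity),
    ← Real.rpow_natCast, ENNReal.ofReal_rpow_of_nonneg (by positivity) (by positivity),
    ← Real.rpow_mul hr, mul_one_div_cancel (by positivity), Real.rpow_one]

section EuclideanBrunnMinkowski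

variable {n : ℕ} {A B : Set (EuclideanSpace ℝ (Fin n))}

theorem EuclideanSpace.volume_smul_rpow_one_div (hn : 0 < n) {r : ℝ} (hr : 0 ≤ r)
    (s : Set (EuclideanSpace ℝ (Fin n))) :
    volume (r • s) ^ (1 / n : ℝ) = ENNReal.ofReal r * volume s ^ (1 / n : ℝ) :=
  Measure.addHaar_smul_rpow_one_div volume finrank_euclideanSpace_fin hn hr s

theorem ofReal_add_le_volume_add_rpow (hn : 0 < n) (hAm : MeasurableSet A)
    (hBm : MeasurableSet B) (hABm : MeasurableSet (A + B)) {a b : ℝ} (ha : 0 < a) (hb : 0 < b)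
    (hA : volume A ^ (1 / n : ℝ) = ENNReal.ofReal a)
    (hB : volume B ^ (1 / n : ℝ) = ENNReal.ofReal b) :
    ENNReal.ofReal (a + b) ≤ volume (A + B) ^ (1 / n : ℝ) := by
  set A' := ((a + b) / a) • A
  set B' := ((a + b) / b) • B
  have hA' : volume A' ^ (1 / n : ℝ) = ENNReal.ofReal (a + b) := by
    rw [EuclideanSpace.volume_smul_rpow_one_div hn (by positivity), hA,
      ← ENNReal.ofReal_mul (by positivity), div_mul_cancel₀ _ ha.ne']
  have hB' : volume B' ^ (1 / n : ℝ) = ENNReal.ofReal (a + b) := by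
    rw [EuclideanSpace.volume_smul_rpow_one_div hn (by positivity), hB,
      ← ENNReal.ofReal_mul (by positivity), div_mul_cancel₀ _ hb.ne']
  have hvol : volume A' = volume B' :=
    ENNReal.rpow_left_injective (by positivity) (hA'.trans hB'.symm)
  set θ := b / (a + b) with hθ
  have hθ0 : 0 < θ := by positivity
  have hθ1 : θ < 1 := by rw [hθ, div_lt_one (by positivity)]; linarith
  have hset : (1 - θ) • A' + θ • B' = A + B := by
    have h1 : (1 - θ) * ((a + b) / a) = 1 := by rw [hθ]; field_simp; ring
    have h2 : θ * ((a + b) / b) = 1 := by rw [hθ]; field_simp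
    rw [smul_smul, smul_smul, h1, h2, one_smul, one_smul]
  have key := (satisfiesPrekopaLeindler_volume_euclideanSpace n).measure_rpow_mul_measure_rpow_le
    hθ0 hθ1 (hAm.const_smul₀ _) (hBm.const_smul₀ _) (hset ▸ hABm)
  rw [hset, ← hvol, ← ENNReal.rpow_add_of_nonneg _ _ (sub_nonneg.2 hθ1.le) hθ0.le, sub_add_cancel,
    ENNReal.rpow_one] at key
  exact hA' ▸ ENNReal.rpow_le_rpow key (by positivity)

theorem volume_rpow_add_volume_rpow_le (hn : 0 < n) (hA : A.Nonempty) (hB : B.Nonempty)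
    (hAm : MeasurableSet A) (hBm : MeasurableSet B) (hABm : MeasurableSet (A + B)) :
    volume A ^ (1 / n : ℝ) + volume B ^ (1 / n : ℝ) ≤ volume (A + B) ^ (1 / n : ℝ) := by
  have hp : 0 < (1 / n : ℝ) := by positivity
  rcases eq_or_ne (volume (A + B)) ∞ with hABtop | hABtop
  · rw [hABtop, ENNReal.top_rpow_of_pos hp]
    exact le_top
  rcases eq_or_ne (volume A) 0 with hA0 | hA0
  · rw [hA0, ENNReal.zero_rpow_of_pos hp, zero_add]
    exact ENNReal.rpow_le_rpow (measure_le_measure_add_left hA) hp.le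
  rcases eq_or_ne (volume B) 0 with hB0 | hB0
  · rw [hB0, ENNReal.zero_rpow_of_pos hp, add_zero]
    exact ENNReal.rpow_le_rpow (measure_le_measure_add_right hB) hp.le
  have hAtop : volume A ≠ ∞ := ne_top_of_le_ne_top hABtop (measure_le_measure_add_right hB)
  have hBtop : volume B ≠ ∞ := ne_top_of_le_ne_top hABtop (measure_le_measure_add_left hA)
  have hAfin : volume A ^ (1 / n : ℝ) ≠ ∞ := by finiteness
  have hBfin : volume B ^ (1 / n : ℝ) ≠ ∞ := by finiteness
  have key := ofReal_add_le_volume_add_rpow hn hAm hBm hABm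
    (ENNReal.toReal_pos (by positivity) hAfin) (ENNReal.toReal_pos (by positivity) hBfin)
    (ENNReal.ofReal_toReal hAfin).symm (ENNReal.ofReal_toReal hBfin).symm
  rwa [ENNReal.ofReal_add ENNReal.toReal_nonneg ENNReal.toReal_nonneg, ENNReal.ofReal_toReal hAfin,
    ENNReal.ofReal_toReal hBfin] at key

end EuclideanBrunnMinkowski

/-- Brunn–Minkowski inequality in ℝⁿ. -/
theorem brunn_minkowski (n : ℕ) (hn : 0 < n) (A B : Set (EuclideanSpace ℝ (Fin n)))
    (hA : A.Nonempty) (hB : B.Nonempty) (hAm : MeasurableSet A) (hBm : MeasurableSet B)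
    (t : ℝ) (ht0 : 0 ≤ t) (ht1 : t ≤ 1)
    (hm : MeasurableSet ((1 - t) • A + t • B)) :
    ENNReal.ofReal (1 - t) * volume A ^ ((1 : ℝ) / n) +
      ENNReal.ofReal t * volume B ^ ((1 : ℝ) / n) ≤
      volume ((1 - t) • A + t • B) ^ ((1 : ℝ) / n) := by
  rcases ht0.eq_or_lt with rfl | ht0
  · simp [zero_smul_set hB]
  rcases ht1.eq_or_lt with rfl | ht1
  · simp [zero_smul_set hA]
  rw [← EuclideanSpace.volume_smul_rpow_one_div hn (sub_nonneg.2 ht1.le),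
    ← EuclideanSpace.volume_smul_rpow_one_div hn ht0.le]
  exact volume_rpow_add_volume_rpow_le hn hA.smul_set hB.smul_set (hAm.const_smul₀ _)
    (hBm.const_smul₀ _) hm
end
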